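/- arXiv:2006.03295 — 3 statements merged into one kernel-verified Lean document; each statement's English description precedes it below -/
import Mathlib

section
/- Let δ : ℝ → ℝ be infinitely differentiable with δ(x) > 0 for all x, and suppose δ satisfies the Hirota bilinear equation (D_x⁴ + 2x) δ·δ = 0, i.e., 2(δ(x)δ''''(x) − 4δ'(x)δ'''(x) + 3(δ''(x))²) + 2x·δ(x)² = 0 for all x. Define p : ℝ → ℝ by p(x) = −(log ∘ δ)''(x). Then p satisfies the first Painlevé equation: p''(x) = 6 p(x)² + x for all x ∈ ℝ. -/
open scoped ContDiff


/-- If a smooth positive `δ` satisfies the Hirota bilinear equation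
`(D_x⁴ + 2x) δ·δ = 0`, then `p = −(log δ)''` satisfies the first Painlevé
equation `p'' = 6p² + x`. -/
theorem hirota_to_painleve_I (δ : ℝ → ℝ) (hδ : ContDiff ℝ (⊤ : ℕ∞) δ)
    (hpos : ∀ x : ℝ, 0 < δ x)
    (hhirota : ∀ x : ℝ,
      2 * (δ x * iteratedDeriv 4 δ x - 4 * deriv δ x * iteratedDeriv 3 δ x
        + 3 * (iteratedDeriv 2 δ x) ^ 2) + 2 * x * (δ x) ^ 2 = 0)
    (p : ℝ → ℝ) (hp : ∀ x : ℝ, p x = -(iteratedDeriv 2 (Real.log ∘ δ) x)) :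
    ∀ x : ℝ, deriv (deriv p) x = 6 * (p x) ^ 2 + x := by
  have h0 : ∀ y : ℝ, δ y ≠ 0 := fun y => (hpos y).ne'
  set d1 : ℝ → ℝ := deriv δ with hd1def
  set d2 : ℝ → ℝ := deriv d1 with hd2def
  set d3 : ℝ → ℝ := deriv d2 with hd3def
  set d4 : ℝ → ℝ := deriv d3 with hd4def
  -- smoothness chain
  have hδ' : ContDiff ℝ ∞ δ := hδ.of_le (by simp)
  have hc1 : ContDiff ℝ ∞ d1 := (contDiff_infty_iff_deriv.mp hδ').2
  have hc2 : ContDiff ℝ ∞ d2 := (contDiff_infty_iff_deriv.mp hc1).2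
  have hc3 : ContDiff ℝ ∞ d3 := (contDiff_infty_iff_deriv.mp hc2).2
  have Hδ : ∀ y : ℝ, HasDerivAt δ (d1 y) y := fun y =>
    ((contDiff_infty_iff_deriv.mp hδ').1 y).hasDerivAt
  have Hd1 : ∀ y : ℝ, HasDerivAt d1 (d2 y) y := fun y =>
    ((contDiff_infty_iff_deriv.mp hc1).1 y).hasDerivAt
  have Hd2 : ∀ y : ℝ, HasDerivAt d2 (d3 y) y := fun y =>
    ((contDiff_infty_iff_deriv.mp hc2).1 y).hasDerivAt
  have Hd3 : ∀ y : ℝ, HasDerivAt d3 (d4 y) y := fun y =>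
    ((contDiff_infty_iff_deriv.mp hc3).1 y).hasDerivAt
  -- first derivative of log ∘ δ
  have Hlog : ∀ y : ℝ, HasDerivAt (Real.log ∘ δ) (d1 y / δ y) y := fun y =>
    (Hδ y).log (h0 y)
  have hlog1 : deriv (Real.log ∘ δ) = fun y => d1 y / δ y :=
    funext fun y => (Hlog y).deriv
  -- second derivative of log ∘ δ
  have Hq : ∀ y : ℝ, HasDerivAt (fun y => d1 y / δ y)
      ((d2 y * δ y - d1 y * d1 y) / (δ y) ^ 2) y := fun y =>
    (Hd1 y).div (Hδ y) (h0 y)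
  have hg2 : ∀ y : ℝ, iteratedDeriv 2 (Real.log ∘ δ) y
      = (d2 y * δ y - d1 y * d1 y) / (δ y) ^ 2 := by
    intro y
    have : iteratedDeriv 2 (Real.log ∘ δ) = deriv (deriv (Real.log ∘ δ)) := by
      simp [iteratedDeriv_succ, iteratedDeriv_zero]
    rw [this, hlog1, (Hq y).deriv]
  -- explicit formula for p
  have hpP : p = fun y => -((d2 y * δ y - d1 y * d1 y) / (δ y) ^ 2) :=
    funext fun y => by rw [hp y, hg2 y]
  -- derivative of p
  have hP1 : ∀ y : ℝ, HasDerivAt p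
      ((-(d3 y) * (δ y) ^ 2 + 3 * d1 y * d2 y * δ y - 2 * (d1 y) ^ 3) / (δ y) ^ 3) y := by
    intro y
    rw [hpP]
    have h := (((Hd2 y).mul (Hδ y)).sub ((Hd1 y).mul (Hd1 y))).div
      ((Hδ y).pow 2) (pow_ne_zero 2 (h0 y))
    have h' := h.neg
    refine h'.congr_deriv ?_
    simp only [Pi.pow_apply, Pi.sub_apply, Pi.mul_apply, Nat.cast_ofNat]
    field_simp [h0 y]
    ring
  have hderivp : deriv p = fun y =>
      (-(d3 y) * (δ y) ^ 2 + 3 * d1 y * d2 y * δ y - 2 * (d1 y) ^ 3) / (δ y) ^ 3 :=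
    funext fun y => (hP1 y).deriv
  -- second derivative of p
  intro x
  have hP2 : HasDerivAt (fun y =>
      (-(d3 y) * (δ y) ^ 2 + 3 * d1 y * d2 y * δ y - 2 * (d1 y) ^ 3) / (δ y) ^ 3)
      ((-(d4 x) * (δ x) ^ 3 + 4 * d1 x * d3 x * (δ x) ^ 2 + 3 * (d2 x) ^ 2 * (δ x) ^ 2
        - 12 * (d1 x) ^ 2 * d2 x * δ x + 6 * (d1 x) ^ 4) / (δ x) ^ 4) x := by
    have hnum : HasDerivAt (fun y => -(d3 y) * (δ y) ^ 2 + 3 * d1 y * d2 y * δ y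
        - 2 * (d1 y) ^ 3)
        (-(d4 x) * (δ x) ^ 2 + (-(d3 x)) * (2 * δ x ^ 1 * d1 x)
          + ((3 * d2 x * d2 x + 3 * d1 x * d3 x) * δ x + 3 * d1 x * d2 x * d1 x)
          - 2 * (3 * d1 x ^ 2 * d2 x)) x := by
      have h1 := ((Hd3 x).neg.mul ((Hδ x).pow 2))
      have h2 := (((Hd1 x).const_mul (3 : ℝ)).mul (Hd2 x)).mul (Hδ x)
      have h3 := ((Hd1 x).pow 3).const_mul (2 : ℝ)
      have := (h1.add h2).sub h3
      refine this.congr_deriv ?_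
      simp only [Pi.pow_apply, Pi.neg_apply, Pi.mul_apply]
      norm_num
    have h := hnum.div ((Hδ x).pow 3) (pow_ne_zero 3 (h0 x))
    refine h.congr_deriv ?_
    simp only [Pi.pow_apply, Pi.sub_apply, Pi.mul_apply, Nat.cast_ofNat]
    field_simp [h0 x]
    ring
  rw [hderivp, hP2.deriv, hpP]
  -- use the Hirota equation
  have hh := hhirota x
  simp only [iteratedDeriv_succ, iteratedDeriv_zero, ← hd1def, ← hd2def, ← hd3def,
    ← hd4def] at hh
  have hd4x : d4 x * δ x = 4 * d1 x * d3 x - 3 * (d2 x) ^ 2 - x * (δ x) ^ 2 := by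
    nlinarith [hh]
  have hne := h0 x
  field_simp [hne]
  linear_combination (-(δ x) ^ 2) * hd4x
end

section
/- Let R be a star ring, i.e., a ring equipped with an additive anti-automorphism x ↦ x* with (x*)* = x and (x*y)* = y* * x*. Let D : R → R be a derivation (additive with D(x*y) = D(x)*y + x*D(y)) that commutes with the star operation: D(x*) = (D(x))* for all x. Let u ∈ R be a unit with u* = u⁻¹, and let Y ∈ R satisfy D(u) = −Y*u. Then Y* = −Y. -/
/-!
Differentiating `u u* = 1` with the Leibniz rule gives `D u · u* + u · (D u)* = 0`.
Substituting `D u = -Y u` turns the first term into `-Y` and the second into `-Y*`.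
-/

theorem map_one_eq_zero_of_leibniz {R : Type*} [NonAssocRing R] (D : R → R)
    (hmul : ∀ x y : R, D (x * y) = D x * y + x * D y) : D 1 = 0 := by
  have h := hmul 1 1
  simp only [one_mul, mul_one] at h
  exact left_eq_add.mp h

theorem star_eq_neg_of_leibniz_of_mul_star_self_eq_one {R : Type*} [Ring R] [StarRing R]
    (D : R → R) (hmul : ∀ x y : R, D (x * y) = D x * y + x * D y)
    (hstar : ∀ x : R, D (star x) = star (D x))
    {u Y : R} (hu : u * star u = 1) (hY : D u = -Y * u) :
    star Y = -Y := by
  have hDu : D u * star u = -Y := by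
    rw [hY, mul_assoc, hu, mul_one]
  have hDstar : u * D (star u) = -star Y := by
    rw [hstar, hY, star_mul, star_neg, mul_neg, mul_neg, ← mul_assoc, hu, one_mul]
  have hsum : -Y + -star Y = 0 := by
    rw [← hDu, ← hDstar, ← hmul, hu, map_one_eq_zero_of_leibniz D hmul]
  refine eq_neg_of_add_eq_zero_left ?_
  rw [add_comm, ← neg_eq_zero, neg_add]
  exact hsum

theorem negative_part_anti_selfadjoint_general {R : Type*} [Ring R] [StarRing R]
    (D : R → R)
    (hmul : ∀ x y : R, D (x * y) = D x * y + x * D y)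
    (hstar : ∀ x : R, D (star x) = star (D x))
    (u : Rˣ) (hu : star (u : R) = ((u⁻¹ : Rˣ) : R))
    (Y : R) (hY : D (u : R) = -Y * (u : R)) :
    star Y = -Y :=
  star_eq_neg_of_leibniz_of_mul_star_self_eq_one D hmul hstar (by rw [hu, Units.mul_inv]) hY

/-- If a derivation `D` commutes with the star operation, `u` is a unit with
`u* = u⁻¹`, and `D u = −Y u`, then `Y* = −Y`. -/
theorem negative_part_anti_selfadjoint {R : Type*} [Ring R] [StarRing R]
    (D : R → R)
    (hadd : ∀ x y : R, D (x + y) = D x + D y)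
    (hmul : ∀ x y : R, D (x * y) = D x * y + x * D y)
    (hstar : ∀ x : R, D (star x) = star (D x))
    (u : Rˣ) (hu : star (u : R) = ((u⁻¹ : Rˣ) : R))
    (Y : R) (hY : D (u : R) = -Y * (u : R)) :
    star Y = -Y :=
  negative_part_anti_selfadjoint_general D hmul hstar u hu Y hY
end

section
/- Fix integers N ≥ 2 and c ≥ 1. Let P be the polynomial ring over ℚ in the variables t_{k,α}, indexed by positive integers k not divisible by N and components α ∈ {1,…,c}. For each positive integer a divisible by N, define the linear operator V_a on P by V_a = Σ_{α=1}^{c} ( Σ_{j ≥ 1, N∤j} (j+a) t_{j+a,α} ∂/∂t_{j,α} + (1/2) Σ_{k+s=a, k,s ≥ 1, N∤k} k·s·t_{k,α} t_{s,α} ), where the quadratic sum acts by multiplication (note N∤k forces N∤s since N | a). Then for all positive integers a, b divisible by N: V_a ∘ V_b − V_b ∘ V_a = (b − a) · V_{a+b} as linear endomorphisms of P. -/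
open MvPolynomial

/-- Indices of the time variables of the mcGD hierarchy: positive integers
not divisible by `N`. -/
abbrev GDTimeIndex (N : ℕ) : Type := {k : ℕ // 0 < k ∧ ¬ N ∣ k}

/-- Variables `t_{k,α}` of the polynomial ring: a time index together with a
component `α ∈ {1, …, c}`. -/
abbrev GDVar (N c : ℕ) : Type := GDTimeIndex N × Fin c

/-- The Virasoro operator
`V_a = Σ_α ( Σ_{j ≥ 1, N∤j} (j+a) t_{j+a,α} ∂/∂t_{j,α}
        + (1/2) Σ_{k+s=a, k,s ≥ 1, N∤k} k s t_{k,α} t_{s,α} )`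
acting on polynomials in the variables `t_{k,α}` (`k ≥ 1`, `N ∤ k`),
for `a` a positive multiple of `N`. -/
noncomputable def virasoroOpGD (N c : ℕ) (a : ℕ) (ha : N ∣ a)
    (p : MvPolynomial (GDVar N c) ℚ) : MvPolynomial (GDVar N c) ℚ :=
  (∑ᶠ (j : GDTimeIndex N) (α : Fin c),
      ((j.1 + a : ℕ) : ℚ) •
        (X ((⟨j.1 + a,
              Nat.lt_of_lt_of_le j.2.1 (Nat.le_add_right _ _),
              fun hd => j.2.2 (by simpa using Nat.dvd_sub hd ha)⟩ : GDTimeIndex N), α)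
          * pderiv ((j, α) : GDVar N c) p))
  + ((1 / 2 : ℚ) • ∑ᶠ (k : GDTimeIndex N) (s : GDTimeIndex N) (α : Fin c),
      if k.1 + s.1 = a then
        ((k.1 : ℚ) * (s.1 : ℚ)) • (X ((k, α) : GDVar N c) * X ((s, α) : GDVar N c))
      else 0) * p

/-!
Write `V_a = D_a + Q_a ·` with `D_a` the derivation `t_{j,α} ↦ (j + a) t_{j+a,α}` and
`Q_a = ½ Σ_α Σ_{k+s=a} k s t_{k,α} t_{s,α}`. For any derivations and multipliers,
`[D_a + Q_a, D_b + Q_b] = [D_a, D_b] + (D_a Q_b - D_b Q_a)`.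

Extend `t_{k,α}` by zero to all `k ∈ ℕ`. Because `N ∣ a`, `D_a` still sends every `t_k` to
`(k + a) t_{k+a}`, so the sums over admissible indices become plain sums over antidiagonals.
On generators `[D_a, D_b] = (b - a) D_{a+b}`, and
`D_a Q_b = Σ_{K+S=a+b} (K - a)₊ K S t_K t_S`. Since
`(K - a)₊ - (K - b)₊ + (S - a)₊ - (S - b)₊ = b - a` whenever `K + S = a + b`, symmetrizing in
`K ↔ S` gives `D_a Q_b - D_b Q_a = (b - a) Q_{a+b}`.
-/

open Finset

theorem finsum_subtype_eq_finsum {α M : Type*} [AddCommMonoid M] {P : α → Prop} (f : α → M)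
    (hf : ∀ a, ¬ P a → f a = 0) : ∑ᶠ a : Subtype P, f a = ∑ᶠ a, f a := by
  classical
  rw [finsum_subtype_eq_finsum_cond]
  refine finsum_congr fun a => ?_
  rw [finsum_eq_if]
  split_ifs with h
  · rfl
  · exact (hf a h).symm

namespace Finset.Nat

theorem finsum_finsum_eq_sum_antidiagonal {M : Type*} [AddCommMonoid M] {m : ℕ}
    (f : ℕ → ℕ → M) (hf : ∀ k s, k + s ≠ m → f k s = 0) :
    ∑ᶠ (k) (s), f k s = ∑ p ∈ antidiagonal m, f p.1 p.2 := by
  have hsupp : Function.support (fun p : ℕ × ℕ => f p.1 p.2) ⊆ antidiagonal m :=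
    fun p hp => by_contra fun h => hp (hf _ _ (by simpa using h))
  rw [← finsum_curry (fun p : ℕ × ℕ => f p.1 p.2) ((antidiagonal m).finite_toSet.subset hsupp),
    finsum_eq_sum_of_support_subset _ hsupp]

theorem sum_antidiagonal_add_fst {M : Type*} [AddCommMonoid M] (f : ℕ × ℕ → M) (a b : ℕ) :
    ∑ p ∈ antidiagonal b, f (p.1 + a, p.2) = ∑ p ∈ antidiagonal (a + b) with a ≤ p.1, f p := by
  rw [antidiagonal_filter_le_fst_of_le (Nat.le_add_right a b), sum_map, Nat.add_sub_cancel_left]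
  rfl

theorem two_nsmul_sum_antidiagonal_smul {R M : Type*} [Ring R] [AddCommGroup M] [Module R M]
    {m : ℕ} (g : ℕ → R) (w : ℕ × ℕ → M) (r : R) (hw : ∀ p, w p.swap = w p)
    (hg : ∀ p ∈ antidiagonal m, g p.1 + g p.2 = r) :
    2 • ∑ p ∈ antidiagonal m, g p.1 • w p = r • ∑ p ∈ antidiagonal m, w p := by
  conv_lhs => rw [two_nsmul]; enter [2]; rw [← sum_antidiagonal_swap]
  simp only [Prod.fst_swap, hw, ← sum_add_distrib, ← add_smul, smul_sum]
  exact sum_congr rfl fun p hp => by rw [hg p hp]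

end Finset.Nat

namespace MvPolynomial

variable {σ R : Type*} [CommSemiring R]

theorem support_mul_pderiv_subset (g : σ → MvPolynomial σ R) (p : MvPolynomial σ R) :
    Function.support (fun i => g i * pderiv i p) ⊆ p.vars := fun i hi => by
  by_contra h
  exact hi (show g i * pderiv i p = 0 by rw [pderiv_eq_zero_of_notMem_vars h, mul_zero])

theorem finsum_mul_pderiv (g : σ → MvPolynomial σ R) (p : MvPolynomial σ R) :
    ∑ᶠ i, g i * pderiv i p = mkDerivation R g p := by
  classical
  set D : Derivation R (MvPolynomial σ R) (MvPolynomial σ R) := ∑ i ∈ p.vars, g i • pderiv i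
  have hD : ∀ q, D q = ∑ i ∈ p.vars, g i * pderiv i q := fun q => by
    change Derivation.coeFnAddMonoidHom D q = _
    simp only [D, map_sum, Finset.sum_apply, Derivation.coeFnAddMonoidHom_apply,
      Derivation.smul_apply, smul_eq_mul]
  rw [finsum_eq_sum_of_support_subset _ (support_mul_pderiv_subset g p), ← hD]
  refine derivation_eq_of_forall_mem_vars fun j hj => ?_
  rw [hD, mkDerivation_X, Finset.sum_eq_single j (fun i _ hij => by simp [pderiv_X, hij])
    (absurd hj)]
  simp

end MvPolynomial

def antidiagonalQuadratic (R : Type*) {A : Type*} [CommRing R] [CommRing A] [Algebra R A]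
    (T : ℕ → A) (m : ℕ) : A :=
  ∑ p ∈ antidiagonal m, ((p.1 : R) * p.2) • (T p.1 * T p.2)

namespace Derivation

variable {R A : Type*} [CommRing R] [CommRing A] [Algebra R A]

theorem commutator_add_mul_apply (D₁ D₂ : Derivation R A A) (q₁ q₂ p : A) :
    D₁ (D₂ p + q₂ * p) + q₁ * (D₂ p + q₂ * p) - (D₂ (D₁ p + q₁ * p) + q₂ * (D₁ p + q₁ * p))
      = ⁅D₁, D₂⁆ p + (D₁ q₂ - D₂ q₁) * p := by
  simp only [commutator_apply, map_add, leibniz, smul_eq_mul]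
  ring

def IsShift (D : Derivation R A A) (T : ℕ → A) (a : ℕ) : Prop :=
  ∀ k, D (T k) = ((k + a : ℕ) : R) • T (k + a)

namespace IsShift

variable {Da Db Dab : Derivation R A A} {T : ℕ → A} {a b : ℕ}

theorem commutator_apply (hDa : Da.IsShift T a) (hDb : Db.IsShift T b)
    (hDab : Dab.IsShift T (a + b)) (k : ℕ) :
    ⁅Da, Db⁆ (T k) = ((b : R) - a) • Dab (T k) := by
  rw [Derivation.commutator_apply, hDb, map_smul, hDa, hDa, map_smul, hDb, hDab,
    show k + b + a = k + (a + b) by ring, show k + a + b = k + (a + b) by ring,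
    smul_smul, smul_smul, smul_smul, ← sub_smul]
  push_cast
  ring_nf

/-- The subtraction `p.1 - a` truncates at `0`, which kills exactly the terms with `p.1 < a`. -/
theorem apply_antidiagonalQuadratic (hDa : Da.IsShift T a) (b : ℕ) :
    Da (antidiagonalQuadratic R T b) = 2 • ∑ p ∈ antidiagonal (a + b),
      ((p.1 - a : ℕ) : R) • ((p.1 : R) * p.2) • (T p.1 * T p.2) := by
  set F : ℕ × ℕ → A := fun p => ((p.1 - a : ℕ) : R) • ((p.1 : R) * p.2) • (T p.1 * T p.2)
  have hF : ∀ p ∈ antidiagonal (a + b), F p ≠ 0 → a ≤ p.1 := fun p _ hp => by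
    by_contra hlt
    exact hp (by simp [F, Nat.sub_eq_zero_of_le (not_le.1 hlt).le])
  rw [← sum_filter_of_ne hF, ← Finset.Nat.sum_antidiagonal_add_fst, two_nsmul]
  conv_rhs => enter [2]; rw [← Finset.Nat.sum_antidiagonal_swap]
  rw [antidiagonalQuadratic, map_sum, ← sum_add_distrib]
  refine sum_congr rfl fun p _ => ?_
  simp only [F, map_smul, leibniz, Prod.fst_swap, Prod.snd_swap, smul_eq_mul,
    Nat.add_sub_cancel]
  rw [hDa, hDa, mul_smul_comm, mul_smul_comm, mul_comm (T p.1) (T (p.2 + a)),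
    mul_comm (T p.2) (T (p.1 + a)), add_comm]
  push_cast
  module

theorem commutator_antidiagonalQuadratic (hDa : Da.IsShift T a) (hDb : Db.IsShift T b) :
    Da (antidiagonalQuadratic R T b) - Db (antidiagonalQuadratic R T a)
      = ((b : R) - a) • antidiagonalQuadratic R T (a + b) := by
  rw [hDa.apply_antidiagonalQuadratic, hDb.apply_antidiagonalQuadratic, add_comm b a, ← smul_sub,
    ← sum_sub_distrib, antidiagonalQuadratic]
  simp only [← sub_smul]
  refine Finset.Nat.two_nsmul_sum_antidiagonal_smul
    (fun K => ((K - a : ℕ) : R) - ((K - b : ℕ) : R))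
    (fun p => ((p.1 : R) * p.2) • (T p.1 * T p.2)) _ (fun p => ?_) fun p hp => ?_
  · simp only [Prod.fst_swap, Prod.snd_swap, mul_comm]
  · have hsum : p.1 + p.2 = a + b := mem_antidiagonal.1 hp
    have : ((p.1 - a : ℕ) : ℤ) - ((p.1 - b : ℕ) : ℤ) + (((p.2 - a : ℕ) : ℤ) - ((p.2 - b : ℕ) : ℤ))
        = (b : ℤ) - a := by omega
    exact_mod_cast congrArg (Int.cast (R := R)) this

end IsShift

end Derivation

namespace GDVirasoro

variable {N c : ℕ}

noncomputable def timeVar (N c : ℕ) (α : Fin c) (k : ℕ) : MvPolynomial (GDVar N c) ℚ :=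
  if h : 0 < k ∧ ¬ N ∣ k then X (⟨k, h⟩, α) else 0

theorem timeVar_eq_X {k : ℕ} (h : 0 < k ∧ ¬ N ∣ k) (α : Fin c) :
    timeVar N c α k = X (⟨k, h⟩, α) :=
  dif_pos h

theorem timeVar_eq_zero {k : ℕ} (h : ¬ (0 < k ∧ ¬ N ∣ k)) (α : Fin c) : timeVar N c α k = 0 :=
  dif_neg h

theorem timeVar_val (j : GDTimeIndex N) (α : Fin c) : timeVar N c α j.1 = X (j, α) :=
  timeVar_eq_X j.2 α

noncomputable def virasoroDeriv (N c a : ℕ) :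
    Derivation ℚ (MvPolynomial (GDVar N c) ℚ) (MvPolynomial (GDVar N c) ℚ) :=
  mkDerivation ℚ fun v => ((v.1.1 + a : ℕ) : ℚ) • timeVar N c v.2 (v.1.1 + a)

noncomputable def virasoroQuad (N c a : ℕ) : MvPolynomial (GDVar N c) ℚ :=
  (1 / 2 : ℚ) • ∑ α, antidiagonalQuadratic ℚ (timeVar N c α) a

theorem isShift_virasoroDeriv {a : ℕ} (ha : N ∣ a) (α : Fin c) :
    (virasoroDeriv N c a).IsShift (timeVar N c α) a := by
  intro k
  by_cases hk : 0 < k ∧ ¬ N ∣ k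
  · rw [timeVar_eq_X hk, virasoroDeriv, mkDerivation_X]
  · have hka : ¬ (0 < k + a ∧ ¬ N ∣ k + a) := by
      rintro ⟨-, hka⟩
      rcases Nat.eq_zero_or_pos k with rfl | hpos
      · exact hka (by simpa using ha)
      · exact hka (Nat.dvd_add (by tauto) ha)
    rw [timeVar_eq_zero hk, timeVar_eq_zero hka, map_zero, smul_zero]

theorem virasoroDeriv_commutator {a b : ℕ} (ha : N ∣ a) (hb : N ∣ b) :
    ⁅virasoroDeriv N c a, virasoroDeriv N c b⁆ = ((b : ℚ) - a) • virasoroDeriv N c (a + b) := by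
  refine derivation_ext fun v => ?_
  rw [← timeVar_val, (isShift_virasoroDeriv ha v.2).commutator_apply
    (isShift_virasoroDeriv hb v.2) (isShift_virasoroDeriv (Nat.dvd_add ha hb) v.2),
    Derivation.smul_apply]

theorem virasoroDeriv_virasoroQuad_sub {a b : ℕ} (ha : N ∣ a) (hb : N ∣ b) :
    virasoroDeriv N c a (virasoroQuad N c b) - virasoroDeriv N c b (virasoroQuad N c a)
      = ((b : ℚ) - a) • virasoroQuad N c (a + b) := by
  simp only [virasoroQuad, Derivation.map_smul, map_sum, ← smul_sub, ← sum_sub_distrib,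
    (isShift_virasoroDeriv ha _).commutator_antidiagonalQuadratic (isShift_virasoroDeriv hb _),
    ← smul_sum, smul_comm ((b : ℚ) - a)]

theorem virasoroDeriv_apply (a : ℕ) (p : MvPolynomial (GDVar N c) ℚ) :
    virasoroDeriv N c a p = ∑ᶠ (j : GDTimeIndex N) (α : Fin c),
      ((j.1 + a : ℕ) : ℚ) • (timeVar N c α (j.1 + a) * pderiv (j, α) p) := by
  rw [virasoroDeriv, ← finsum_mul_pderiv,
    finsum_curry _ (p.vars.finite_toSet.subset (support_mul_pderiv_subset _ p))]
  simp only [smul_mul_assoc]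

theorem virasoroQuad_eq_finsum (a : ℕ) :
    virasoroQuad N c a = (1 / 2 : ℚ) • ∑ᶠ (k : GDTimeIndex N) (s : GDTimeIndex N) (α : Fin c),
      if k.1 + s.1 = a then
        ((k.1 : ℚ) * (s.1 : ℚ)) • (X ((k, α) : GDVar N c) * X ((s, α) : GDVar N c))
      else 0 := by
  set G : ℕ → ℕ → MvPolynomial (GDVar N c) ℚ := fun k s => ∑ α, if k + s = a then
    ((k : ℚ) * s) • (timeVar N c α k * timeVar N c α s) else 0
  have hG : ∀ k s, ¬ (0 < k ∧ ¬ N ∣ k) ∨ ¬ (0 < s ∧ ¬ N ∣ s) → G k s = 0 := by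
    rintro k s h
    refine sum_eq_zero fun α _ => ?_
    rcases h with h | h <;> simp [timeVar_eq_zero h]
  calc virasoroQuad N c a = (1 / 2 : ℚ) • ∑ p ∈ antidiagonal a, G p.1 p.2 := by
        rw [virasoroQuad, sum_comm]
        exact congrArg _ (sum_congr rfl fun α _ => sum_congr rfl fun p hp =>
          (if_pos (mem_antidiagonal.1 hp)).symm)
    _ = (1 / 2 : ℚ) • ∑ᶠ (k : GDTimeIndex N) (s : GDTimeIndex N), G k.1 s.1 := by
        rw [← Finset.Nat.finsum_finsum_eq_sum_antidiagonal G fun k s h => sum_eq_zero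
          fun α _ => if_neg h, ← finsum_subtype_eq_finsum (P := fun k => 0 < k ∧ ¬ N ∣ k)
            (fun k => ∑ᶠ s, G k s) fun k hk => by simp [hG k _ (Or.inl hk)]]
        exact congrArg _ (finsum_congr fun k =>
          (finsum_subtype_eq_finsum (G k.1) fun s hs => hG _ s (Or.inr hs)).symm)
    _ = _ := by simp only [G, finsum_eq_sum_of_fintype, timeVar_val]

theorem virasoroOpGD_eq (a : ℕ) (ha : N ∣ a) (p : MvPolynomial (GDVar N c) ℚ) :
    virasoroOpGD N c a ha p = virasoroDeriv N c a p + virasoroQuad N c a * p := by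
  rw [virasoroOpGD, virasoroDeriv_apply, virasoroQuad_eq_finsum]
  simp only [← timeVar_eq_X]

end GDVirasoro

theorem virasoro_commutation_GD_general (N c : ℕ)
    (a b : ℕ) (ha : N ∣ a) (hb : N ∣ b)
    (p : MvPolynomial (GDVar N c) ℚ) :
    virasoroOpGD N c a ha (virasoroOpGD N c b hb p)
        - virasoroOpGD N c b hb (virasoroOpGD N c a ha p)
      = ((b : ℚ) - (a : ℚ)) • virasoroOpGD N c (a + b) (Nat.dvd_add ha hb) p := by
  simp only [GDVirasoro.virasoroOpGD_eq]
  rw [Derivation.commutator_add_mul_apply, GDVirasoro.virasoroDeriv_commutator ha hb,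
    GDVirasoro.virasoroDeriv_virasoroQuad_sub ha hb, Derivation.smul_apply, smul_add, smul_mul_assoc]

/-- The operators `V_a` (`a` a positive multiple of `N`) satisfy the Virasoro
commutation relation `V_a ∘ V_b − V_b ∘ V_a = (b − a) · V_{a+b}`. -/
theorem virasoro_commutation_GD (N c : ℕ) (hN : 2 ≤ N) (hc : 1 ≤ c)
    (a b : ℕ) (hapos : 0 < a) (ha : N ∣ a) (hbpos : 0 < b) (hb : N ∣ b)
    (p : MvPolynomial (GDVar N c) ℚ) :
    virasoroOpGD N c a ha (virasoroOpGD N c b hb p)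
        - virasoroOpGD N c b hb (virasoroOpGD N c a ha p)
      = ((b : ℚ) - (a : ℚ)) • virasoroOpGD N c (a + b) (Nat.dvd_add ha hb) p :=
  virasoro_commutation_GD_general N c a b ha hb p
end
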